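/- For every positive integer i such that C contains a codeword of Hamming weight i, there exists a nonnegative integer λ such that every 2-element subset {x,y} of F_q is contained in exactly λ of the distinct supports of the codewords of weight i in C; that is, the supports of the codewords of weight i in C form a 2-design on the point set F_q. -/

import Mathlib

/-- `trp p r z = z + z^p + ⋯ + z^(p^(r-1))`, the trace form used for `Tr_r`. -/
def trp (p r : ℕ) {F : Type} [Field F] (z : F) : F :=
  ∑ i ∈ Finset.range r, z ^ p ^ i

/-- The codeword `c(a,b,c,h)` of the code `C`, viewed as a function on `F_q = F`;
its value at `x` is `Tr_s(a x^(p^s+1)) + Tr_m(b x^(p^l+1) + c x) + h` (the values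
lie in the prime field `F_p ⊆ F`). Here `m = 2s`. -/
def cword (p s l : ℕ) {F : Type} [Field F] (a b c : F) (h : ZMod p) : F → F :=
  fun x => trp p s (a * x ^ (p ^ s + 1)) + trp p (2 * s) (b * x ^ (p ^ l + 1) + c * x)
    + ZMod.cast h

/-- The support of the codeword `c(a,b,c,h)`; its cardinality is the Hamming weight. -/
def suppw (p s l : ℕ) {F : Type} [Field F] [Fintype F] [DecidableEq F]
    (a b c : F) (h : ZMod p) : Finset F :=
  Finset.univ.filter fun x => cword p s l a b c h x ≠ 0


section aux

set_option linter.unusedSectionVars false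

variable (p : ℕ) [Fact p.Prime] {F : Type} [Field F] [CharP F p]

lemma trp_add (r : ℕ) (x y : F) : trp p r (x + y) = trp p r x + trp p r y := by
  unfold trp
  rw [← Finset.sum_add_distrib]
  exact Finset.sum_congr rfl fun i _ => add_pow_char_pow ..

lemma trp_shift (m : ℕ) (z : F) (hz : z ^ p ^ m = z) : trp p m (z ^ p) = trp p m z := by
  unfold trp
  calc ∑ i ∈ Finset.range m, (z ^ p) ^ p ^ i
      = ∑ i ∈ Finset.range m, z ^ p ^ (i + 1) :=
        Finset.sum_congr rfl fun i _ => by rw [← pow_mul, ← pow_succ']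
    _ = ∑ i ∈ Finset.range m, z ^ p ^ i := by
        have h2 := Finset.sum_range_succ' (fun i => z ^ p ^ i) m
        rw [Finset.sum_range_succ] at h2
        simp only [pow_zero, pow_one, hz] at h2
        exact (add_right_cancel h2).symm

lemma trp_pow (m k : ℕ) (z : F) (hz : z ^ p ^ m = z) : trp p m (z ^ p ^ k) = trp p m z := by
  induction k with
  | zero => simp
  | succ k ih =>
      have h1 : z ^ p ^ (k + 1) = (z ^ p ^ k) ^ p := by rw [← pow_mul, pow_succ]
      have h2 : (z ^ p ^ k) ^ p ^ m = z ^ p ^ k := by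
        rw [← pow_mul, mul_comm, pow_mul, hz]
      rw [h1, trp_shift p m _ h2, ih]

lemma trp_split (s : ℕ) (z : F) : trp p (2 * s) z = trp p s z + trp p s (z ^ p ^ s) := by
  unfold trp
  rw [two_mul, Finset.sum_range_add]
  congr 1
  refine Finset.sum_congr rfl fun i _ => ?_
  rw [← pow_mul, ← pow_add]

lemma trp_frob (r : ℕ) (w : F) (hw : w ^ p ^ r = w) : trp p r w ^ p = trp p r w := by
  have h1 : trp p r w ^ p = trp p r (w ^ p) := by
    unfold trp
    rw [sum_pow_char]
    exact Finset.sum_congr rfl fun i _ => by rw [← pow_mul, mul_comm, pow_mul]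
  rw [h1, trp_shift p r w hw]

lemma exists_zmod_cast (e : F) (he : e ^ p = e) : ∃ h0 : ZMod p, (ZMod.cast h0 : F) = e := by
  classical
  have hp1 : 1 < p := (Fact.out : p.Prime).one_lt
  set f : Polynomial F := Polynomial.X ^ p - Polynomial.X with hfdef
  have hf0 : f ≠ 0 := FiniteField.X_pow_card_sub_X_ne_zero F hp1
  have hroot : ∀ z : F, z ^ p = z → z ∈ f.roots.toFinset := by
    intro z hz
    rw [Multiset.mem_toFinset, Polynomial.mem_roots hf0]
    simp [hfdef, Polynomial.IsRoot, sub_eq_zero, hz]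
  have hinj : Function.Injective (fun a : ZMod p => (ZMod.cast a : F)) := by
    have := ZMod.castHom_injective F (n := p)
    exact fun a b hab => this hab
  set T : Finset F := Finset.univ.image (fun a : ZMod p => (ZMod.cast a : F)) with hT
  have hTsub : T ⊆ f.roots.toFinset := by
    intro z hz
    rw [hT, Finset.mem_image] at hz
    obtain ⟨a, -, rfl⟩ := hz
    apply hroot
    have h1 : ((ZMod.castHom (dvd_refl p) F) a) ^ p = (ZMod.castHom (dvd_refl p) F) (a ^ p) :=
      (map_pow _ _ _).symm
    rw [ZMod.pow_card] at h1
    simpa [ZMod.castHom_apply] using h1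
  have hcardT : T.card = p := by
    rw [hT, Finset.card_image_of_injective _ hinj, Finset.card_univ, ZMod.card]
  have hcardR : f.roots.toFinset.card ≤ p := by
    calc f.roots.toFinset.card ≤ Multiset.card f.roots := Multiset.toFinset_card_le _
      _ ≤ f.natDegree := Polynomial.card_roots' f
      _ = p := FiniteField.X_pow_card_sub_X_natDegree_eq F hp1
  have hTeq : T = f.roots.toFinset :=
    Finset.eq_of_subset_of_card_le hTsub (by rw [hcardT]; exact hcardR)
  have : e ∈ T := by rw [hTeq]; exact hroot e he
  rw [hT, Finset.mem_image] at this
  obtain ⟨a, -, ha⟩ := this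
  exact ⟨a, ha⟩

lemma cword_comp (s l : ℕ) [Fintype F] (hF : Fintype.card F = p ^ (2 * s)) (hl : l ≤ 2 * s)
    (u v a b c : F) (h : ZMod p) (ha : a ^ p ^ s = a) :
    ∃ a' b' c' : F, ∃ h' : ZMod p, a' ^ p ^ s = a' ∧
      ∀ x : F, cword p s l a' b' c' h' x = cword p s l a b c h (u * x + v) := by
  have hq : ∀ z : F, z ^ p ^ (2 * s) = z := fun z => by rw [← hF]; exact FiniteField.pow_card z
  have hss : ∀ z : F, (z ^ p ^ s) ^ p ^ s = z := fun z => by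
    rw [← pow_mul, ← pow_add, ← two_mul]; exact hq z
  -- constants
  have hE1 : (a * v ^ (p ^ s + 1)) ^ p ^ s = a * v ^ (p ^ s + 1) := by
    rw [mul_pow, ha, ← pow_mul, add_mul, one_mul, pow_add, pow_mul, hss v]
    ring
  have hE1' : trp p s (a * v ^ (p ^ s + 1)) ^ p = trp p s (a * v ^ (p ^ s + 1)) :=
    trp_frob p s _ hE1
  have hE2' : trp p (2 * s) (b * v ^ (p ^ l + 1) + c * v) ^ p
      = trp p (2 * s) (b * v ^ (p ^ l + 1) + c * v) := trp_frob p (2 * s) _ (hq _)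
  set E : F := trp p s (a * v ^ (p ^ s + 1)) + trp p (2 * s) (b * v ^ (p ^ l + 1) + c * v)
    with hEdef
  have hE : E ^ p = E := by rw [hEdef, add_pow_char, hE1', hE2']
  obtain ⟨h0, hh0⟩ := exists_zmod_cast p E hE
  refine ⟨a * u ^ (p ^ s + 1), b * u ^ (p ^ l + 1),
    a * u * v ^ p ^ s + b * u * v ^ p ^ l + (b * u ^ p ^ l * v) ^ p ^ (2 * s - l) + c * u,
    h + h0, ?_, ?_⟩
  · rw [mul_pow, ha, ← pow_mul, add_mul, one_mul, pow_add, pow_mul, hss u]; ring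
  intro x
  have habk : ∀ k : ℕ, (u * x + v) ^ (p ^ k + 1)
      = u ^ (p ^ k + 1) * x ^ (p ^ k + 1) + u ^ p ^ k * v * x ^ p ^ k
        + u * v ^ p ^ k * x + v ^ (p ^ k + 1) := by
    intro k
    have h1 : (u * x + v) ^ p ^ k = u ^ p ^ k * x ^ p ^ k + v ^ p ^ k := by
      rw [add_pow_char_pow, mul_pow]
    rw [pow_succ, h1]
    ring
  have hZ : (a * u * v ^ p ^ s * x) ^ p ^ s = a * u ^ p ^ s * v * x ^ p ^ s := by
    rw [mul_pow, mul_pow, mul_pow, ha, hss v]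
  have eA : a * (u * x + v) ^ (p ^ s + 1)
      = a * u ^ (p ^ s + 1) * x ^ (p ^ s + 1)
        + (a * u * v ^ p ^ s * x + (a * u * v ^ p ^ s * x) ^ p ^ s)
        + a * v ^ (p ^ s + 1) := by
    rw [habk s, hZ]; ring
  have eTrA : trp p s (a * (u * x + v) ^ (p ^ s + 1))
      = trp p s (a * u ^ (p ^ s + 1) * x ^ (p ^ s + 1))
        + trp p (2 * s) (a * u * v ^ p ^ s * x) + trp p s (a * v ^ (p ^ s + 1)) := by
    rw [eA, trp_add, trp_add, trp_add, trp_split]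
  have eB : b * (u * x + v) ^ (p ^ l + 1) + c * (u * x + v)
      = b * u ^ (p ^ l + 1) * x ^ (p ^ l + 1) + b * u ^ p ^ l * v * x ^ p ^ l
        + b * u * v ^ p ^ l * x + c * u * x + (b * v ^ (p ^ l + 1) + c * v) := by
    rw [habk l]; ring
  have eB2 : trp p (2 * s) (b * u ^ p ^ l * v * x ^ p ^ l)
      = trp p (2 * s) ((b * u ^ p ^ l * v) ^ p ^ (2 * s - l) * x) := by
    have hl' : l + (2 * s - l) = 2 * s := Nat.add_sub_cancel' hl
    have h1 : (b * u ^ p ^ l * v * x ^ p ^ l) ^ p ^ (2 * s - l)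
        = (b * u ^ p ^ l * v) ^ p ^ (2 * s - l) * x := by
      rw [mul_pow, ← pow_mul, ← pow_add, hl', hq x]
    calc trp p (2 * s) (b * u ^ p ^ l * v * x ^ p ^ l)
        = trp p (2 * s) ((b * u ^ p ^ l * v * x ^ p ^ l) ^ p ^ (2 * s - l)) :=
          (trp_pow p (2 * s) (2 * s - l) _ (hq _)).symm
      _ = _ := by rw [h1]
  have eTrB : trp p (2 * s) (b * (u * x + v) ^ (p ^ l + 1) + c * (u * x + v))
      = trp p (2 * s) (b * u ^ (p ^ l + 1) * x ^ (p ^ l + 1))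
        + trp p (2 * s) ((b * u ^ p ^ l * v) ^ p ^ (2 * s - l) * x)
        + trp p (2 * s) (b * u * v ^ p ^ l * x) + trp p (2 * s) (c * u * x)
        + trp p (2 * s) (b * v ^ (p ^ l + 1) + c * v) := by
    rw [eB, trp_add, trp_add, trp_add, trp_add, eB2]
  have eL : trp p (2 * s) (b * u ^ (p ^ l + 1) * x ^ (p ^ l + 1)
      + (a * u * v ^ p ^ s + b * u * v ^ p ^ l + (b * u ^ p ^ l * v) ^ p ^ (2 * s - l) + c * u) * x)
      = trp p (2 * s) (b * u ^ (p ^ l + 1) * x ^ (p ^ l + 1))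
        + trp p (2 * s) (a * u * v ^ p ^ s * x)
        + trp p (2 * s) (b * u * v ^ p ^ l * x)
        + trp p (2 * s) ((b * u ^ p ^ l * v) ^ p ^ (2 * s - l) * x)
        + trp p (2 * s) (c * u * x) := by
    rw [show b * u ^ (p ^ l + 1) * x ^ (p ^ l + 1)
      + (a * u * v ^ p ^ s + b * u * v ^ p ^ l + (b * u ^ p ^ l * v) ^ p ^ (2 * s - l) + c * u) * x
      = b * u ^ (p ^ l + 1) * x ^ (p ^ l + 1) + a * u * v ^ p ^ s * x + b * u * v ^ p ^ l * x
        + (b * u ^ p ^ l * v) ^ p ^ (2 * s - l) * x + c * u * x from by ring,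
      trp_add, trp_add, trp_add, trp_add]
  have hcast : (ZMod.cast (h + h0) : F) = ZMod.cast h + E := by
    rw [ZMod.cast_add (dvd_refl p), hh0]
  show trp p s (a * u ^ (p ^ s + 1) * x ^ (p ^ s + 1)) + _ + _ = _
  rw [cword, eL, hcast, eTrA, eTrB, hEdef]
  ring
end aux

def affEquiv {F : Type} [Field F] (u v : F) (hu : u ≠ 0) : F ≃ F where
  toFun x := u * x + v
  invFun y := u⁻¹ * (y - v)
  left_inv x := by field_simp; ring
  right_inv y := by field_simp; ring

@[simp] lemma affEquiv_apply {F : Type} [Field F] (u v : F) (hu : u ≠ 0) (x : F) :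
    affEquiv u v hu x = u * x + v := rfl

@[simp] lemma affEquiv_symm_apply {F : Type} [Field F] (u v : F) (hu : u ≠ 0) (x : F) :
    (affEquiv u v hu).symm x = u⁻¹ * (x - v) := rfl


theorem stmt2 (p s l : ℕ) [Fact p.Prime] (F : Type) [Field F] [Fintype F] [DecidableEq F]
    [CharP F p] (hodd : Odd p) (hs : 2 ≤ s) (hl1 : 1 ≤ l) (hls : l ≠ s)
    (hl2 : l ≤ 2 * s - 1) (hF : Fintype.card F = p ^ (2 * s)) :
    ∀ i : ℕ, 0 < i →
      (∃ a b c : F, ∃ h : ZMod p, a ^ p ^ s = a ∧ (suppw p s l a b c h).card = i) →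
      ∃ lam : ℕ, ∀ x y : F, x ≠ y →
        ((((Finset.univ : Finset (F × F × F × ZMod p)).filter fun t =>
        t.1 ^ p ^ s = t.1 ∧ (suppw p s l t.1 t.2.1 t.2.2.1 t.2.2.2).card = i).image
            fun t => suppw p s l t.1 t.2.1 t.2.2.1 t.2.2.2).filter
            fun S => x ∈ S ∧ y ∈ S).card = lam := by
  intro i hi hex
  clear hex
  have hl2s : l ≤ 2 * s := le_trans hl2 (Nat.sub_le _ _)
  set 𝒮 : Finset (Finset F) := (((Finset.univ : Finset (F × F × F × ZMod p)).filter fun t =>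
      t.1 ^ p ^ s = t.1 ∧ (suppw p s l t.1 t.2.1 t.2.2.1 t.2.2.2).card = i).image
      fun t => suppw p s l t.1 t.2.1 t.2.2.1 t.2.2.2) with h𝒮
  have closed : ∀ (u v : F) (hu : u ≠ 0), ∀ S ∈ 𝒮, S.image ⇑(affEquiv u v hu).symm ∈ 𝒮 := by
    intro u v hu S hS
    rw [h𝒮, Finset.mem_image] at hS ⊢
    obtain ⟨t, ht, rfl⟩ := hS
    rw [Finset.mem_filter] at ht
    obtain ⟨-, ha, hcard⟩ := ht
    obtain ⟨a', b', c', h', ha', hpt⟩ :=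
      cword_comp p s l hF hl2s u v t.1 t.2.1 t.2.2.1 t.2.2.2 ha
    have hsupp : suppw p s l a' b' c' h'
        = (suppw p s l t.1 t.2.1 t.2.2.1 t.2.2.2).image ⇑(affEquiv u v hu).symm := by
      ext z
      simp only [suppw, Finset.mem_filter, Finset.mem_univ, true_and, Finset.mem_image]
      rw [hpt z]
      constructor
      · intro hz
        exact ⟨u * z + v, hz, by simp; field_simp⟩
      · rintro ⟨w, hw, rfl⟩
        have h2 : u * (u⁻¹ * (w - v)) + v = w := by field_simp; ring
        simpa [h2] using hw
    refine ⟨(a', b', c', h'), ?_, ?_⟩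
    · rw [Finset.mem_filter]
      refine ⟨Finset.mem_univ _, ha', ?_⟩
      show (suppw p s l a' b' c' h').card = i
      rw [hsupp, Finset.card_image_of_injective _ (Equiv.injective _), hcard]
    · exact hsupp
  have count : ∀ (u v : F) (hu : u ≠ 0) (x y : F),
      (𝒮.filter fun S => (affEquiv u v hu x) ∈ S ∧ (affEquiv u v hu y) ∈ S).card
        = (𝒮.filter fun S => x ∈ S ∧ y ∈ S).card := by
    intro u v hu x y
    have closed' : ∀ S ∈ 𝒮, S.image ⇑(affEquiv u v hu) ∈ 𝒮 := by
      intro S hS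
      have hfun : ∀ z, (affEquiv u⁻¹ (-(u⁻¹ * v)) (inv_ne_zero hu)).symm z
          = affEquiv u v hu z := by
        intro z; simp; field_simp
      have := closed u⁻¹ (-(u⁻¹ * v)) (inv_ne_zero hu) S hS
      rwa [Finset.image_congr (fun z _ => hfun z)] at this
    refine Finset.card_nbij' (fun S => S.image ⇑(affEquiv u v hu).symm)
      (fun S => S.image ⇑(affEquiv u v hu)) ?_ ?_ ?_ ?_
    · intro S hS
      rw [Finset.mem_coe, Finset.mem_filter] at hS ⊢
      obtain ⟨hS1, hx, hy⟩ := hS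
      exact ⟨closed u v hu S hS1, Finset.mem_image.mpr ⟨_, hx, (affEquiv u v hu).symm_apply_apply x⟩,
        Finset.mem_image.mpr ⟨_, hy, (affEquiv u v hu).symm_apply_apply y⟩⟩
    · intro S hS
      rw [Finset.mem_coe, Finset.mem_filter] at hS ⊢
      obtain ⟨hS1, hx, hy⟩ := hS
      exact ⟨closed' S hS1, Finset.mem_image.mpr ⟨_, hx, rfl⟩, Finset.mem_image.mpr ⟨_, hy, rfl⟩⟩
    · intro S hS
      simp only [Finset.image_image]
      ext z
      simp [Function.comp]
    · intro S hS
      simp only [Finset.image_image]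
      ext z
      simp [Function.comp]
  refine ⟨(𝒮.filter fun S => (0 : F) ∈ S ∧ (1 : F) ∈ S).card, ?_⟩
  intro x y hxy
  have hu : y - x ≠ 0 := sub_ne_zero_of_ne hxy.symm
  have h0 : affEquiv (y - x) x hu 0 = x := by simp
  have h1 : affEquiv (y - x) x hu 1 = y := by simp
  have := count (y - x) x hu 0 1
  rw [h0, h1] at this
  exact this
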